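/- Let S ∈ (1/2)ℕ, S ≥ 1/2, q ∈ (0,1), Δ = (q + q⁻¹)/2. Define the spin-S two-site kink Hamiltonian h_S(Δ) = S²·𝟙⊗𝟙 − S³⊗S³ − Δ⁻¹(S¹⊗S¹ + S²⊗S²) + S√(1 − 1/Δ²)(S³⊗𝟙 − 𝟙⊗S³) on ℂ^{2S+1}⊗ℂ^{2S+1}, and the single-site vectors χ(w) = Σ_{m=−S}^{S} w^{S−m} √(binom(2S, S−m)) |m⟩ for w ∈ ℂ. Then for every w ∈ ℂ, h_S(Δ)(χ(w) ⊗ χ(qw)) = 0. -/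
import Mathlib


open Matrix Kronecker ComplexOrder

noncomputable section

/-- The spin value `S = N/2`, where `N = 2S ∈ ℕ`. -/
def Sval (N : ℕ) : ℝ := (N : ℝ) / 2

/-- The magnetic quantum number `m = S − k` of the basis vector indexed by
`k ∈ {0,…,N}` (so `k = S − m`). -/
def mval (N : ℕ) (k : Fin (N + 1)) : ℝ := Sval N - (k : ℕ)

/-- The spin-S matrix `S³`: diagonal with `S³|m⟩ = m|m⟩`. -/
def S3S (N : ℕ) : Matrix (Fin (N + 1)) (Fin (N + 1)) ℂ :=
  Matrix.diagonal fun k => ((mval N k : ℝ) : ℂ)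

/-- The spin-S raising operator `S⁺|m⟩ = √(S(S+1) − m(m+1)) |m+1⟩`. -/
def SplusS (N : ℕ) : Matrix (Fin (N + 1)) (Fin (N + 1)) ℂ :=
  fun k' k =>
    if (k' : ℕ) + 1 = (k : ℕ) then
      ((Real.sqrt (Sval N * (Sval N + 1) - mval N k * (mval N k + 1)) : ℝ) : ℂ)
    else 0

/-- The spin-S lowering operator `S⁻|m⟩ = √(S(S+1) − m(m−1)) |m−1⟩`. -/
def SminusS (N : ℕ) : Matrix (Fin (N + 1)) (Fin (N + 1)) ℂ :=
  fun k' k =>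
    if (k' : ℕ) = (k : ℕ) + 1 then
      ((Real.sqrt (Sval N * (Sval N + 1) - mval N k * (mval N k - 1)) : ℝ) : ℂ)
    else 0

/-- The spin-S matrix `S¹ = (S⁺ + S⁻)/2`. -/
def S1S (N : ℕ) : Matrix (Fin (N + 1)) (Fin (N + 1)) ℂ :=
  (1 / 2 : ℂ) • (SplusS N + SminusS N)

/-- The spin-S matrix `S² = (S⁺ − S⁻)/(2i)`. -/
def S2S (N : ℕ) : Matrix (Fin (N + 1)) (Fin (N + 1)) ℂ :=
  (1 / (2 * Complex.I)) • (SplusS N - SminusS N)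

/-- The anisotropy `Δ = (q + q⁻¹)/2`. -/
def Delta (q : ℝ) : ℝ := (q + q⁻¹) / 2

/-- The spin-S two-site kink Hamiltonian
`h_S(Δ) = S²·𝟙⊗𝟙 − S³⊗S³ − Δ⁻¹(S¹⊗S¹ + S²⊗S²) + S√(1 − 1/Δ²)(S³⊗𝟙 − 𝟙⊗S³)`
on `ℂ^{2S+1}⊗ℂ^{2S+1}`. -/
def hSpin (N : ℕ) (q : ℝ) :
    Matrix (Fin (N + 1) × Fin (N + 1)) (Fin (N + 1) × Fin (N + 1)) ℂ :=
  ((Sval N : ℂ) ^ 2) • (1 : Matrix (Fin (N + 1) × Fin (N + 1)) (Fin (N + 1) × Fin (N + 1)) ℂ)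
    - S3S N ⊗ₖ S3S N - ((Delta q : ℂ))⁻¹ • (S1S N ⊗ₖ S1S N + S2S N ⊗ₖ S2S N)
    + ((Sval N * Real.sqrt (1 - 1 / (Delta q) ^ 2) : ℝ) : ℂ) •
        (S3S N ⊗ₖ (1 : Matrix (Fin (N + 1)) (Fin (N + 1)) ℂ)
          - (1 : Matrix (Fin (N + 1)) (Fin (N + 1)) ℂ) ⊗ₖ S3S N)

/-- The single-site vector `χ(w) = Σ_{m=−S}^{S} w^{S−m} √(binom(2S, S−m)) |m⟩`,
in components `χ(w)_k = w^k √(binom(N,k))` with `k = S − m`. -/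
def chiS (N : ℕ) (w : ℂ) : Fin (N + 1) → ℂ :=
  fun k => w ^ (k : ℕ) * ((Real.sqrt (Nat.choose N k) : ℝ) : ℂ)

lemma kron_mulVec {n : ℕ} (A B : Matrix (Fin n) (Fin n) ℂ) (x y : Fin n → ℂ)
    (p : Fin n × Fin n) :
    (A ⊗ₖ B).mulVec (fun p => x p.1 * y p.2) p = A.mulVec x p.1 * B.mulVec y p.2 := by
  simp only [Matrix.mulVec, dotProduct, kroneckerMap_apply, Fintype.sum_prod_type,
    Finset.sum_mul_sum]
  exact Finset.sum_congr rfl fun i _ => Finset.sum_congr rfl fun j _ => by ring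

lemma sqrt_choose_succ (N k : ℕ) (hk : k ≤ N) :
    Real.sqrt (((k:ℝ)+1) * ((N:ℝ) - k)) * Real.sqrt (N.choose (k+1)) =
      ((N:ℝ) - k) * Real.sqrt (N.choose k) := by
  have h1 : ((N.choose (k+1) : ℝ)) * ((k:ℝ)+1) = (N.choose k : ℝ) * ((N:ℝ) - k) := by
    have h := Nat.choose_succ_right_eq N k
    have h2 : ((N.choose (k + 1) * (k + 1) : ℕ) : ℝ) = ((N.choose k * (N - k) : ℕ) : ℝ) := by
      exact_mod_cast congrArg (Nat.cast : ℕ → ℝ) h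
    push_cast [Nat.cast_sub hk] at h2
    linarith
  have hNk : (0:ℝ) ≤ (N:ℝ) - k := by
    have := Nat.cast_le (α := ℝ).2 hk; linarith
  rw [← Real.sqrt_mul (by positivity),
    show ((k:ℝ)+1) * ((N:ℝ) - k) * (N.choose (k+1)) = ((N:ℝ)-k)^2 * (N.choose k) by nlinarith,
    Real.sqrt_mul (by positivity), Real.sqrt_sq hNk]

lemma splus_mulVec (N : ℕ) (u : ℂ) (k : Fin (N+1)) :
    (SplusS N).mulVec (chiS N u) k =
      (((N:ℝ) - (k:ℕ) : ℝ) : ℂ) * u ^ ((k:ℕ)+1) * ((Real.sqrt (N.choose k) : ℝ) : ℂ) := by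
  simp only [Matrix.mulVec, dotProduct, SplusS, chiS]
  by_cases hk : (k : ℕ) < N
  · have hkN : ((k:ℕ)+1) < N + 1 := by omega
    rw [Finset.sum_eq_single (⟨(k:ℕ)+1, hkN⟩ : Fin (N+1))]
    · rw [if_pos rfl]
      have harg : Sval N * (Sval N + 1) -
          mval N ⟨(k:ℕ)+1, hkN⟩ * (mval N ⟨(k:ℕ)+1, hkN⟩ + 1)
          = ((k:ℝ)+1) * ((N:ℝ) - (k:ℕ)) := by
        simp only [Sval, mval]; push_cast; ring
      rw [harg]
      have hs := sqrt_choose_succ N k (le_of_lt hk)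
      have : ((⟨(k:ℕ)+1, hkN⟩ : Fin (N+1)) : ℕ) = (k:ℕ)+1 := rfl
      rw [this]
      rw [show (((N:ℝ) - (k:ℕ) : ℝ) : ℂ) * u ^ ((k:ℕ)+1) * ((Real.sqrt (N.choose k) : ℝ) : ℂ)
          = (((((N:ℝ) - (k:ℕ)) * Real.sqrt (N.choose k) : ℝ)) : ℂ) * u ^ ((k:ℕ)+1) by
        push_cast; ring, ← hs]
      push_cast; ring
    · intro j _ hj
      rw [if_neg, zero_mul]
      intro hc
      exact hj (Fin.ext (by simpa using hc.symm))
    · intro h; exact absurd (Finset.mem_univ _) h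
  · have hkeq : (k : ℕ) = N := by omega
    rw [Finset.sum_eq_zero, show ((N:ℝ) - (k:ℕ) : ℝ) = 0 by rw [hkeq]; ring]
    · simp
    · intro j _
      rw [if_neg, zero_mul]
      intro hc
      have := j.2; omega

lemma sqrt_choose_succ' (N j : ℕ) (hj : j ≤ N) :
    Real.sqrt (((j:ℝ)+1) * ((N:ℝ) - j)) * Real.sqrt (N.choose j) =
      ((j:ℝ)+1) * Real.sqrt (N.choose (j+1)) := by
  have h1 : ((N.choose (j+1) : ℝ)) * ((j:ℝ)+1) = (N.choose j : ℝ) * ((N:ℝ) - j) := by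
    have h := Nat.choose_succ_right_eq N j
    have h2 : ((N.choose (j + 1) * (j + 1) : ℕ) : ℝ) = ((N.choose j * (N - j) : ℕ) : ℝ) := by
      exact_mod_cast congrArg (Nat.cast : ℕ → ℝ) h
    push_cast [Nat.cast_sub hj] at h2
    linarith
  have hNj : (0:ℝ) ≤ (N:ℝ) - j := by
    have := Nat.cast_le (α := ℝ).2 hj; linarith
  rw [← Real.sqrt_mul (by positivity),
    show ((j:ℝ)+1) * ((N:ℝ) - j) * (N.choose j) = ((j:ℝ)+1)^2 * (N.choose (j+1)) by
      nlinarith,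
    Real.sqrt_mul (by positivity), Real.sqrt_sq (by positivity)]

lemma sminus_mulVec (N : ℕ) (u : ℂ) (l : Fin (N+1)) :
    (SminusS N).mulVec (chiS N u) l =
      (((l:ℕ) : ℝ) : ℂ) * u ^ ((l:ℕ)-1) * ((Real.sqrt (N.choose l) : ℝ) : ℂ) := by
  simp only [Matrix.mulVec, dotProduct, SminusS, chiS]
  rcases Nat.eq_zero_or_pos (l : ℕ) with hl | hl
  · rw [Finset.sum_eq_zero, hl]
    · simp
    · intro j _
      rw [if_neg (by omega), zero_mul]
  · obtain ⟨j, hj⟩ : ∃ j, (l:ℕ) = j + 1 := ⟨(l:ℕ)-1, by omega⟩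
    have hjN : j < N + 1 := by have := l.2; omega
    have hjle : j ≤ N := by have := l.2; omega
    rw [Finset.sum_eq_single (⟨j, hjN⟩ : Fin (N+1))]
    · rw [if_pos (by simpa using hj)]
      have harg : Sval N * (Sval N + 1) -
          mval N ⟨j, hjN⟩ * (mval N ⟨j, hjN⟩ - 1)
          = ((j:ℝ)+1) * ((N:ℝ) - j) := by
        simp only [Sval, mval]; push_cast; ring
      rw [harg]
      have hs := sqrt_choose_succ' N j hjle
      have hv : ((⟨j, hjN⟩ : Fin (N+1)) : ℕ) = j := rfl
      rw [hv, hj]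
      rw [show ((((j:ℕ)+1 : ℕ) : ℝ) : ℂ) * u ^ (j+1-1) * ((Real.sqrt (N.choose (j+1)) : ℝ) : ℂ)
          = (((((j:ℝ)+1) * Real.sqrt (N.choose (j+1)) : ℝ)) : ℂ) * u ^ j by
        push_cast; ring, ← hs]
      push_cast; ring
    · intro b _ hb
      rw [if_neg, zero_mul]
      intro hc
      exact hb (Fin.ext (by simp only [Fin.val_mk]; omega))
    · intro h; exact absurd (Finset.mem_univ _) h

lemma sqrt_delta (q : ℝ) (hq0 : 0 < q) (hq1 : q < 1) :
    Real.sqrt (1 - 1 / (Delta q)^2) = (1 - q^2)/(1 + q^2) := by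
  have hq : q ≠ 0 := ne_of_gt hq0
  have h1 : (1:ℝ) + q^2 ≠ 0 := by positivity
  have h : 1 - 1/(Delta q)^2 = ((1-q^2)/(1+q^2))^2 := by
    unfold Delta
    rw [div_pow, div_pow]
    field_simp
    ring
  rw [h, Real.sqrt_sq (div_nonneg (by nlinarith) (by positivity))]

lemma delta_ne (q : ℝ) (hq0 : 0 < q) : ((Delta q : ℝ) : ℂ) ≠ 0 := by
  have : (0:ℝ) < Delta q := by
    unfold Delta
    positivity
  simpa using Complex.ofReal_ne_zero.2 (ne_of_gt this)

set_option maxHeartbeats 2000000 in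
/-- Let `S ∈ (1/2)ℕ`, `S ≥ 1/2` (i.e. `N = 2S ≥ 1`), `q ∈ (0,1)`,
`Δ = (q + q⁻¹)/2`. Then for every `w ∈ ℂ`,
`h_S(Δ)(χ(w) ⊗ χ(qw)) = 0`. -/
theorem hSpin_product_kernel (N : ℕ) (hN : 1 ≤ N) (q : ℝ)
    (hq0 : 0 < q) (hq1 : q < 1) (w : ℂ) :
    (hSpin N q).mulVec (fun p => chiS N w p.1 * chiS N ((q : ℂ) * w) p.2) = 0 := by
  have hI2 : (1 / (2 * Complex.I)) * (1 / (2 * Complex.I)) = -(1/4 : ℂ) := by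
    rw [div_mul_div_comm, one_mul, mul_mul_mul_comm, Complex.I_mul_I]
    norm_num
  have hS2 : S2S N ⊗ₖ S2S N
      = (-(1/4) : ℂ) • ((SplusS N - SminusS N) ⊗ₖ (SplusS N - SminusS N)) := by
    rw [S2S, Matrix.smul_kronecker, Matrix.kronecker_smul, smul_smul, hI2]
  have hS1 : S1S N ⊗ₖ S1S N
      = ((1/4) : ℂ) • ((SplusS N + SminusS N) ⊗ₖ (SplusS N + SminusS N)) := by
    rw [S1S, Matrix.smul_kronecker, Matrix.kronecker_smul, smul_smul]
    norm_num
  have hq' : q ≠ 0 := ne_of_gt hq0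
  have hD : Delta q = (1+q^2)/(2*q) := by unfold Delta; field_simp; ring
  have hDinv : (((Delta q : ℝ)) : ℂ)⁻¹ = 2*(q:ℂ)/(1+(q:ℂ)^2) := by
    rw [hD]; push_cast; rw [inv_div]
  have hq1q : (1:ℂ) + (q:ℂ)^2 ≠ 0 := by
    have h0 : (1:ℝ) + q^2 ≠ 0 := by positivity
    exact_mod_cast fun h => h0 (by exact_mod_cast h)
  have hqC : (q:ℂ) ≠ 0 := Complex.ofReal_ne_zero.2 hq'
  funext p
  obtain ⟨k, l⟩ := p
  simp only [hSpin, hS1, hS2, Matrix.sub_mulVec, Matrix.add_mulVec, Matrix.smul_mulVec,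
    Pi.add_apply, Pi.sub_apply, Pi.smul_apply, smul_eq_mul, Pi.zero_apply, Matrix.one_mulVec]
  rw [kron_mulVec, kron_mulVec, kron_mulVec, kron_mulVec, kron_mulVec]
  simp only [Matrix.add_mulVec, Matrix.sub_mulVec, Pi.add_apply, Pi.sub_apply,
    Matrix.one_mulVec, splus_mulVec, sminus_mulVec, S3S, Matrix.mulVec_diagonal]
  rw [sqrt_delta q hq0 hq1, hDinv]
  simp only [chiS, mval, Sval]
  push_cast
  rcases Nat.eq_zero_or_pos (k:ℕ) with hk0 | hk0
  · rcases Nat.eq_zero_or_pos (l:ℕ) with hl0 | hl0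
    · rw [hk0, hl0]; push_cast; field_simp; ring
    · obtain ⟨l', hl⟩ : ∃ l', (l:ℕ) = l' + 1 := ⟨(l:ℕ)-1, by omega⟩
      rw [hk0, hl]
      simp only [Nat.add_sub_cancel]
      push_cast
      field_simp
      ring
  · obtain ⟨k', hk⟩ : ∃ k', (k:ℕ) = k' + 1 := ⟨(k:ℕ)-1, by omega⟩
    rcases Nat.eq_zero_or_pos (l:ℕ) with hl0 | hl0
    · rw [hk, hl0]
      simp only [Nat.add_sub_cancel]
      push_cast
      field_simp
      ring
    · obtain ⟨l', hl⟩ : ∃ l', (l:ℕ) = l' + 1 := ⟨(l:ℕ)-1, by omega⟩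
      rw [hk, hl]
      simp only [Nat.add_sub_cancel]
      push_cast
      field_simp
      ring
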